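/- arXiv:2006.12923 — 6 statements merged into one kernel-verified Lean document; each statement's English description precedes it below -/
import Mathlib

section
/- In the algebra D(b_•, c_•), the following additional relations hold: η²γ = 0, βη² = 0, μ²σ = 0, and γμ² = 0. -/
/- The 36-dimensional algebra D(b_•, c_•) on the quiver Δ with vertices
   1,2,3, loops α at 1, η at 2, μ at 3, and arrows β : 1 → 2, γ : 2 → 3,
   σ : 3 → 1. -/

namespace SocleWSA4

variable (K : Type) [Field K]

/-- Generators: 0 = e₁, 1 = e₂, 2 = e₃, 3 = α, 4 = β, 5 = η, 6 = γ,
7 = μ, 8 = σ. -/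
noncomputable def e1 : FreeAlgebra K (Fin 9) := FreeAlgebra.ι K 0
noncomputable def e2 : FreeAlgebra K (Fin 9) := FreeAlgebra.ι K 1
noncomputable def e3 : FreeAlgebra K (Fin 9) := FreeAlgebra.ι K 2
noncomputable def al : FreeAlgebra K (Fin 9) := FreeAlgebra.ι K 3
noncomputable def be : FreeAlgebra K (Fin 9) := FreeAlgebra.ι K 4
noncomputable def et : FreeAlgebra K (Fin 9) := FreeAlgebra.ι K 5
noncomputable def ga : FreeAlgebra K (Fin 9) := FreeAlgebra.ι K 6
noncomputable def mu : FreeAlgebra K (Fin 9) := FreeAlgebra.ι K 7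
noncomputable def si : FreeAlgebra K (Fin 9) := FreeAlgebra.ι K 8

/-- The defining relations of `D(b_•, c_•)`, where `b i` (resp. `c i`) is the
value `b_{i+1}` (resp. `c_{i+1}`) for `i : Fin 3`.  The relations include the
path-algebra (idempotent and source/target) relations. -/
inductive DRel (b c : Fin 3 → K) : FreeAlgebra K (Fin 9) → FreeAlgebra K (Fin 9) → Prop
  | unit : DRel b c (e1 K + e2 K + e3 K) 1
  | idem1 : DRel b c (e1 K * e1 K) (e1 K)
  | idem2 : DRel b c (e2 K * e2 K) (e2 K)
  | idem3 : DRel b c (e3 K * e3 K) (e3 K)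
  | orth12 : DRel b c (e1 K * e2 K) 0
  | orth21 : DRel b c (e2 K * e1 K) 0
  | orth13 : DRel b c (e1 K * e3 K) 0
  | orth31 : DRel b c (e3 K * e1 K) 0
  | orth23 : DRel b c (e2 K * e3 K) 0
  | orth32 : DRel b c (e3 K * e2 K) 0
  | sal : DRel b c (e1 K * al K) (al K)
  | tal : DRel b c (al K * e1 K) (al K)
  | sbe : DRel b c (e1 K * be K) (be K)
  | tbe : DRel b c (be K * e2 K) (be K)
  | set : DRel b c (e2 K * et K) (et K)
  | tet : DRel b c (et K * e2 K) (et K)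
  | sga : DRel b c (e2 K * ga K) (ga K)
  | tga : DRel b c (ga K * e3 K) (ga K)
  | smu : DRel b c (e3 K * mu K) (mu K)
  | tmu : DRel b c (mu K * e3 K) (mu K)
  | ssi : DRel b c (e3 K * si K) (si K)
  | tsi : DRel b c (si K * e1 K) (si K)
  | r1 : DRel b c (be K * ga K) (c 0 • (al K * be K * et K * ga K * mu K))
  | r2 : DRel b c (al K * be K * et K * ga K * mu K * si K)
                  (be K * et K * ga K * mu K * si K * al K)
  | r3 : DRel b c (al K * al K)
      (c 0 • (be K * et K * ga K * mu K * si K)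
        + b 0 • (be K * et K * ga K * mu K * si K * al K))
  | r4 : DRel b c (be K * ga K * mu K) 0
  | r5 : DRel b c (mu K * si K * be K) 0
  | r6 : DRel b c (ga K * si K * al K) 0
  | r7 : DRel b c (ga K * si K) (c 1 • (et K * ga K * mu K * si K * al K))
  | r8 : DRel b c (et K * ga K * mu K * si K * al K * be K)
                  (ga K * mu K * si K * al K * be K * et K)
  | r9 : DRel b c (et K * et K)
      (c 1 • (ga K * mu K * si K * al K * be K)
        + b 1 • (ga K * mu K * si K * al K * be K * et K))
  | r10 : DRel b c (al K * be K * ga K) 0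
  | r11 : DRel b c (si K * be K * et K) 0
  | r12 : DRel b c (et K * ga K * si K) 0
  | r13 : DRel b c (si K * be K) (c 2 • (mu K * si K * al K * be K * et K * ga K))
  | r14 : DRel b c (mu K * si K * al K * be K * et K * ga K)
                   (si K * al K * be K * et K * ga K * mu K)
  | r15 : DRel b c (mu K * mu K)
      (c 2 • (si K * al K * be K * et K * ga K)
        + b 2 • (si K * al K * be K * et K * ga K * mu K))
  | r16 : DRel b c (al K * al K * be K) 0
  | r17 : DRel b c (si K * al K * al K) 0

/-- The canonical projection onto `D(b_•, c_•)`. -/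
noncomputable def pi (b c : Fin 3 → K) :
    FreeAlgebra K (Fin 9) →ₐ[K] RingQuot (DRel K b c) :=
  RingQuot.mkAlgHom K (DRel K b c)

end SocleWSA4

/-! Each of `η²` and `μ²` is, by its defining relation, a combination of a path `p` and of `p`
followed by the loop itself (`p = γμσαβ`, resp. `σαβηγ`). Multiplying by the neighbouring
arrow pushes every term into one of the zero relations `βγμ = 0`, `αβγ = 0`, `γσα = 0`,
`ηγσ = 0`, after using the commutativity relation at vertex 2, resp. 3, to move the loop in
front of `p` where needed. -/

section SquareRelation

variable {R A : Type*} [CommSemiring R] [Semiring A] [Algebra R A] {x p y z : A} {s t : R}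

theorem mul_mul_self_eq_zero_of_mul_self_eq (hx : x * x = s • p + t • (p * y))
    (hz : z * p = 0) : z * (x * x) = 0 := by
  rw [hx, mul_add, mul_smul_comm, mul_smul_comm, ← mul_assoc, hz, zero_mul,
    smul_zero, smul_zero, add_zero]

theorem mul_self_mul_eq_zero_of_mul_self_eq (hx : x * x = s • p + t • (p * y))
    (hp : p * z = 0) (hpy : p * y * z = 0) : x * x * z = 0 := by
  rw [hx, add_mul, smul_mul_assoc, smul_mul_assoc, hp, hpy, smul_zero, smul_zero, add_zero]

end SquareRelation

namespace SocleWSA4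

variable {K : Type} [Field K]

theorem pi_eq_of_rel (b c : Fin 3 → K) {x y : FreeAlgebra K (Fin 9)} (h : DRel K b c x y) :
    pi K b c x = pi K b c y :=
  RingQuot.mkAlgHom_rel K h

variable (b c : Fin 3 → K)

theorem pi_et_sq_mul_ga : pi K b c (et K * et K * ga K) = 0 := by
  have h8 := pi_eq_of_rel b c .r8
  have h9 := pi_eq_of_rel b c .r9
  have h10 := pi_eq_of_rel b c .r10
  simp only [map_mul, map_add, map_smul, map_zero] at h8 h9 h10 ⊢
  refine mul_self_mul_eq_zero_of_mul_self_eq h9 (by simp [mul_assoc, h10]) ?_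
  rw [← h8]
  simp [mul_assoc, h10]

theorem pi_be_mul_et_sq : pi K b c (be K * (et K * et K)) = 0 := by
  have h4 := pi_eq_of_rel b c .r4
  have h9 := pi_eq_of_rel b c .r9
  simp only [map_mul, map_add, map_smul, map_zero] at h4 h9 ⊢
  exact mul_mul_self_eq_zero_of_mul_self_eq h9 (by simp [← mul_assoc, h4])

theorem pi_mu_sq_mul_si : pi K b c (mu K * mu K * si K) = 0 := by
  have h12 := pi_eq_of_rel b c .r12
  have h14 := pi_eq_of_rel b c .r14
  have h15 := pi_eq_of_rel b c .r15
  simp only [map_mul, map_add, map_smul, map_zero] at h12 h14 h15 ⊢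
  refine mul_self_mul_eq_zero_of_mul_self_eq h15 (by simp [mul_assoc, h12]) ?_
  rw [← h14]
  simp [mul_assoc, h12]

theorem pi_ga_mul_mu_sq : pi K b c (ga K * (mu K * mu K)) = 0 := by
  have h6 := pi_eq_of_rel b c .r6
  have h15 := pi_eq_of_rel b c .r15
  simp only [map_mul, map_add, map_smul, map_zero] at h6 h15 ⊢
  exact mul_mul_self_eq_zero_of_mul_self_eq h15 (by simp [← mul_assoc, h6])

end SocleWSA4

open SocleWSA4 in
/-- In the algebra `D(b_•, c_•)` the additional relations
`η²γ = 0`, `βη² = 0`, `μ²σ = 0` and `γμ² = 0` hold. -/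
theorem socle_wsa_stmt4 (K : Type) [Field K] (b c : Fin 3 → K) :
    pi K b c (et K * et K * ga K) = 0 ∧
    pi K b c (be K * (et K * et K)) = 0 ∧
    pi K b c (mu K * mu K * si K) = 0 ∧
    pi K b c (ga K * (mu K * mu K)) = 0 :=
  ⟨pi_et_sq_mul_ga b c, pi_be_mul_et_sq b c, pi_mu_sq_mul_si b c, pi_ga_mul_mu_sq b c⟩
end

section
/- In the algebra Q(2A)^k(b), the relations γα² = 0 and α³ = (βγα)^k = (αβγ)^k hold. -/
/- The algebra Q(2A)^k(b): quiver with vertices 1,2, loop α at 1,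
   arrows β : 1 → 2, γ : 2 → 1, with relations
   α² = (βγα)^{k−1}βγ + b(βγα)^k, βγβ = (αβγ)^{k−1}αβ,
   γβγ = (γαβ)^{k−1}γα, α²β = 0. -/

namespace SocleWSA5

variable (K : Type) [Field K]

/-- Generators: 0 = e₁, 1 = e₂, 2 = α, 3 = β, 4 = γ. -/
noncomputable def e1 : FreeAlgebra K (Fin 5) := FreeAlgebra.ι K 0
noncomputable def e2 : FreeAlgebra K (Fin 5) := FreeAlgebra.ι K 1
noncomputable def al : FreeAlgebra K (Fin 5) := FreeAlgebra.ι K 2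
noncomputable def be : FreeAlgebra K (Fin 5) := FreeAlgebra.ι K 3
noncomputable def ga : FreeAlgebra K (Fin 5) := FreeAlgebra.ι K 4

inductive QARel (k : ℕ) (b : K) : FreeAlgebra K (Fin 5) → FreeAlgebra K (Fin 5) → Prop
  | unit : QARel k b (e1 K + e2 K) 1
  | idem1 : QARel k b (e1 K * e1 K) (e1 K)
  | idem2 : QARel k b (e2 K * e2 K) (e2 K)
  | orth12 : QARel k b (e1 K * e2 K) 0
  | orth21 : QARel k b (e2 K * e1 K) 0
  | sal : QARel k b (e1 K * al K) (al K)
  | tal : QARel k b (al K * e1 K) (al K)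
  | sbe : QARel k b (e1 K * be K) (be K)
  | tbe : QARel k b (be K * e2 K) (be K)
  | sga : QARel k b (e2 K * ga K) (ga K)
  | tga : QARel k b (ga K * e1 K) (ga K)
  | r1 : QARel k b (al K * al K)
      ((be K * ga K * al K) ^ (k - 1) * (be K * ga K) + b • (be K * ga K * al K) ^ k)
  | r2 : QARel k b (be K * ga K * be K) ((al K * be K * ga K) ^ (k - 1) * (al K * be K))
  | r3 : QARel k b (ga K * be K * ga K) ((ga K * al K * be K) ^ (k - 1) * (ga K * al K))
  | r4 : QARel k b (al K * al K * be K) 0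

/-- The canonical projection onto `Q(2A)^k(b)`. -/
noncomputable def pi (k : ℕ) (b : K) :
    FreeAlgebra K (Fin 5) →ₐ[K] RingQuot (QARel K k b) :=
  RingQuot.mkAlgHom K (QARel K k b)

end SocleWSA5

/-! Shifting a power along a word, `(xyz)ⁿx = x(yzx)ⁿ`, turns `γ(βγα)^{k-1}βγ` into
`γβγ(αβγ)^{k-1}`; by the third relation this contains the factor `γα·αβ = γ(α²β) = 0` as soon
as `k ≥ 2`. Multiplying the first relation on the left by `γ` then gives `γα² = 0`, hence
`(βγα)^k α = 0`. Multiplying the first relation on the right by `α` gives `α³ = (βγα)^k`, and on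
the left gives `α³ = (αβγ)^k + b α(βγα)^k`, where `α(βγα)^k = α⁴ = (βγα)^k α = 0`. -/

theorem mul_mul_pow_mul {M : Type*} [Monoid M] (a b c : M) (n : ℕ) :
    (a * b * c) ^ n * a = a * (b * c * a) ^ n := by
  simpa only [mul_assoc] using mul_pow_mul a (b * c) n

namespace SocleWSA5

variable {K R : Type*} [CommSemiring K] [Semiring R] [Algebra K R] {α β γ : R} {b : K} {k : ℕ}

theorem gamma_mul_pow_mul_eq_zero (hk : 2 ≤ k)
    (h3 : γ * β * γ = (γ * α * β) ^ (k - 1) * (γ * α)) (h4 : α * α * β = 0) :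
    γ * (β * γ * α) ^ (k - 1) * (β * γ) = 0 := by
  obtain ⟨n, rfl⟩ : ∃ n, k = n + 2 := ⟨k - 2, by omega⟩
  calc γ * (β * γ * α) ^ (n + 1) * (β * γ)
      = γ * ((β * γ * α) ^ (n + 1) * β) * γ := by simp only [mul_assoc]
    _ = γ * β * ((γ * α * β) ^ (n + 1) * γ) := by rw [mul_mul_pow_mul]; simp only [mul_assoc]
    _ = γ * β * γ * (α * β * γ) ^ (n + 1) := by rw [mul_mul_pow_mul]; simp only [mul_assoc]
    _ = (γ * α * β) ^ (n + 1) * γ * (α * α * β) * γ * (α * β * γ) ^ n := by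
      rw [h3, show n + 2 - 1 = n + 1 from rfl, pow_succ' (α * β * γ)]; simp only [mul_assoc]
    _ = 0 := by rw [h4]; simp only [mul_zero, zero_mul]

theorem pow_mul_alpha_eq_zero (hk : k ≠ 0) (h : γ * (α * α) = 0) :
    (β * γ * α) ^ k * α = 0 := by
  rw [← pow_sub_one_mul hk, mul_assoc, show β * γ * α * α = β * (γ * (α * α)) by
    simp only [mul_assoc], h, mul_zero, mul_zero]

theorem gamma_mul_alpha_mul_alpha_eq_zero (hk : 2 ≤ k)
    (h1 : α * α = (β * γ * α) ^ (k - 1) * (β * γ) + b • (β * γ * α) ^ k)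
    (h3 : γ * β * γ = (γ * α * β) ^ (k - 1) * (γ * α)) (h4 : α * α * β = 0) :
    γ * (α * α) = 0 := by
  have h := gamma_mul_pow_mul_eq_zero hk h3 h4
  have h' : γ * (β * γ * α) ^ k = 0 :=
    calc γ * (β * γ * α) ^ k = γ * (β * γ * α) ^ (k - 1) * (β * γ) * α := by
          rw [← pow_sub_one_mul (by omega : k ≠ 0)]; simp only [mul_assoc]
      _ = 0 := by rw [h, zero_mul]
  rw [h1, mul_add, ← mul_assoc, h, mul_smul_comm, h', smul_zero, add_zero]

theorem alpha_mul_alpha_mul_alpha_eq_pow_beta_gamma_alpha (hk : k ≠ 0)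
    (h1 : α * α = (β * γ * α) ^ (k - 1) * (β * γ) + b • (β * γ * α) ^ k)
    (h : γ * (α * α) = 0) :
    α * α * α = (β * γ * α) ^ k := by
  rw [h1, add_mul, smul_mul_assoc, pow_mul_alpha_eq_zero hk h, smul_zero, add_zero,
    mul_assoc, pow_sub_one_mul hk]

theorem alpha_mul_alpha_mul_alpha_eq_pow_alpha_beta_gamma (hk : k ≠ 0)
    (h1 : α * α = (β * γ * α) ^ (k - 1) * (β * γ) + b • (β * γ * α) ^ k)
    (h : γ * (α * α) = 0) :
    α * α * α = (α * β * γ) ^ k := by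
  have hcube := alpha_mul_alpha_mul_alpha_eq_pow_beta_gamma_alpha hk h1 h
  have hα : α * (β * γ * α) ^ k = 0 :=
    calc α * (β * γ * α) ^ k = α * α * α * α := by rw [← hcube]; simp only [mul_assoc]
      _ = 0 := by rw [hcube, pow_mul_alpha_eq_zero hk h]
  rw [mul_assoc, h1, mul_add, mul_smul_comm, hα, smul_zero, add_zero, ← mul_assoc,
    ← mul_pow_mul, mul_assoc, ← mul_assoc α, pow_sub_one_mul hk]

end SocleWSA5

open SocleWSA5 in
/-- In `Q(2A)^k(b)` the relations `γα² = 0` and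
`α³ = (βγα)^k = (αβγ)^k` hold. -/
theorem socle_wsa_stmt5 (K : Type) [Field K] (k : ℕ) (hk : 2 ≤ k) (b : K) :
    pi K k b (ga K * (al K * al K)) = 0 ∧
    pi K k b (al K * al K * al K) = pi K k b ((be K * ga K * al K) ^ k) ∧
    pi K k b (al K * al K * al K) = pi K k b ((al K * be K * ga K) ^ k) := by
  have h1 := RingQuot.mkAlgHom_rel K (QARel.r1 (K := K) (k := k) (b := b))
  have h3 := RingQuot.mkAlgHom_rel K (QARel.r3 (K := K) (k := k) (b := b))
  have h4 := RingQuot.mkAlgHom_rel K (QARel.r4 (K := K) (k := k) (b := b))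
  simp only [map_mul, map_add, map_pow, map_smul, map_zero] at h1 h3 h4
  have hγαα := gamma_mul_alpha_mul_alpha_eq_zero hk h1 h3 h4
  have hk0 : k ≠ 0 := by omega
  simp only [pi, map_mul, map_pow]
  exact ⟨hγαα, alpha_mul_alpha_mul_alpha_eq_pow_beta_gamma_alpha hk0 h1 hγαα,
    alpha_mul_alpha_mul_alpha_eq_pow_alpha_beta_gamma hk0 h1 hγαα⟩
end

section
/- Let K be a field of characteristic 2, t ≥ 4 an even natural number, and b ∈ K. Then the map defined by α ↦ α, β ↦ β, γ ↦ γ + bγα, η ↦ η + bη² induces a K-algebra isomorphism Q(2B)_3^t(b) → Q(2B)_3^t(0). -/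
/- The algebra Q(2B)_3^t(a,b): quiver with vertices 1,2, loop α at 1, loop η
   at 2, arrows β : 1 → 2, γ : 2 → 1, with relations
   αβ = βη, ηγ = γα, α² = βγ + bα³, γβ = aη^{t−1}, α⁴ = 0, η^{t+1} = 0,
   γα² = 0, α²β = 0.  Q(2B)_3^t(b) := Q(2B)_3^t(1,b). -/

namespace SocleWSA8

variable (K : Type) [Field K]

/-- Generators: 0 = e₁, 1 = e₂, 2 = α, 3 = β, 4 = γ, 5 = η. -/
noncomputable def e1 : FreeAlgebra K (Fin 6) := FreeAlgebra.ι K 0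
noncomputable def e2 : FreeAlgebra K (Fin 6) := FreeAlgebra.ι K 1
noncomputable def al : FreeAlgebra K (Fin 6) := FreeAlgebra.ι K 2
noncomputable def be : FreeAlgebra K (Fin 6) := FreeAlgebra.ι K 3
noncomputable def ga : FreeAlgebra K (Fin 6) := FreeAlgebra.ι K 4
noncomputable def et : FreeAlgebra K (Fin 6) := FreeAlgebra.ι K 5

inductive QBRel (t : ℕ) (a b : K) : FreeAlgebra K (Fin 6) → FreeAlgebra K (Fin 6) → Prop
  | unit : QBRel t a b (e1 K + e2 K) 1
  | idem1 : QBRel t a b (e1 K * e1 K) (e1 K)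
  | idem2 : QBRel t a b (e2 K * e2 K) (e2 K)
  | orth12 : QBRel t a b (e1 K * e2 K) 0
  | orth21 : QBRel t a b (e2 K * e1 K) 0
  | sal : QBRel t a b (e1 K * al K) (al K)
  | tal : QBRel t a b (al K * e1 K) (al K)
  | sbe : QBRel t a b (e1 K * be K) (be K)
  | tbe : QBRel t a b (be K * e2 K) (be K)
  | sga : QBRel t a b (e2 K * ga K) (ga K)
  | tga : QBRel t a b (ga K * e1 K) (ga K)
  | set : QBRel t a b (e2 K * et K) (et K)
  | tet : QBRel t a b (et K * e2 K) (et K)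
  | r1 : QBRel t a b (al K * be K) (be K * et K)
  | r2 : QBRel t a b (et K * ga K) (ga K * al K)
  | r3 : QBRel t a b (al K * al K) (be K * ga K + b • al K ^ 3)
  | r4 : QBRel t a b (ga K * be K) (a • et K ^ (t - 1))
  | r5 : QBRel t a b (al K ^ 4) 0
  | r6 : QBRel t a b (et K ^ (t + 1)) 0
  | r7 : QBRel t a b (ga K * (al K * al K)) 0
  | r8 : QBRel t a b (al K * al K * be K) 0

/-- The canonical projection onto `Q(2B)_3^t(a,b)`. -/
noncomputable def pi (t : ℕ) (a b : K) :
    FreeAlgebra K (Fin 6) →ₐ[K] RingQuot (QBRel K t a b) :=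
  RingQuot.mkAlgHom K (QBRel K t a b)

end SocleWSA8

/-!
The substitution `γ ↦ γ + cγα`, `η ↦ η + cη²` respects the relations of `Q(2B)_3^t(d + c)`
inside `Q(2B)_3^t(d)`: the only delicate one is `γβ = η^{t-1}`, which holds because
`(η + cη²)^{t-1} ≡ η^{t-1} + cη^t` modulo `η^{t+1} = 0`, as `t - 1` is odd in characteristic 2.
Since `0 = b + b`, this gives maps `Q(b) → Q(0)` and `Q(0) → Q(b)`. Either composite fixes
`α, β, γ` and sends `η ↦ η + b³η⁴`. In characteristic 2, composing `x ↦ x + c x^{2^s}` with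
itself gives `x ↦ x + c^{2^s+1} x^{2^{2s}}`, so by nilpotency of `η` both composites have order
dividing `2^t`, and the first map is bijective.
-/

open Polynomial

theorem AlgHom.bijective_of_pow_eq_one {R A : Type*} [CommSemiring R] [Semiring A] [Algebra R A]
    (τ : A →ₐ[R] A) {n : ℕ} (hn : n ≠ 0) (h : τ ^ n = 1) : Function.Bijective τ := by
  obtain ⟨k, rfl⟩ := Nat.exists_eq_succ_of_ne_zero hn
  refine Function.bijective_iff_has_inverse.mpr ⟨⇑(τ ^ k), fun x => ?_, fun x => ?_⟩
  · rw [← AlgHom.mul_apply, ← pow_succ, h, AlgHom.one_apply]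
  · rw [← AlgHom.mul_apply, ← pow_succ', h, AlgHom.one_apply]

theorem AlgHom.bijective_of_comp_pow_eq_one {R A B : Type*} [CommSemiring R] [Semiring A]
    [Semiring B] [Algebra R A] [Algebra R B] (f : A →ₐ[R] B) (g : B →ₐ[R] A) {m n : ℕ}
    (hm : m ≠ 0) (hn : n ≠ 0) (hgf : (g.comp f) ^ m = 1) (hfg : (f.comp g) ^ n = 1) :
    Function.Bijective f :=
  ⟨Function.Injective.of_comp (f := g) ((g.comp f).bijective_of_pow_eq_one hm hgf).1,
    Function.Surjective.of_comp (g := g) ((f.comp g).bijective_of_pow_eq_one hn hfg).2⟩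

namespace SocleWSA8

theorem add_self_eq_zero_of_charTwo (K : Type*) {M : Type*} [Ring K] [CharP K 2]
    [AddCommGroup M] [Module K M] (z : M) : z + z = 0 := by
  rw [← two_smul K z, CharTwo.two_eq_zero, zero_smul]

variable {R : Type*} [CommRing R]

noncomputable def twist (c : R) (q : ℕ) : R[X] := X + C c * X ^ q

theorem aeval_twist {A : Type*} [Semiring A] [Algebra R A] (x : A) (c : R) (q : ℕ) :
    aeval x (twist c q) = x + c • x ^ q := by
  simp [twist, Algebra.smul_def]

theorem aeval_twist_two {A : Type*} [Semiring A] [Algebra R A] (x : A) (c : R) :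
    aeval x (twist c 2) = x + c • (x * x) := by
  rw [aeval_twist, sq]

theorem twist_two_eq_X_mul (c : R) : twist c 2 = X * (1 + C c * X) := by
  rw [twist]; ring

theorem aeval_eq_zero_of_X_pow_dvd {A : Type*} [Semiring A] [Algebra R A] {x : A} {n : ℕ}
    (hx : x ^ n = 0) {p : R[X]} (hp : X ^ n ∣ p) : aeval x p = 0 := by
  obtain ⟨u, rfl⟩ := hp
  rw [map_mul, map_pow, aeval_X, hx, zero_mul]

variable [CharP R 2]

theorem twist_comp_twist (c : R) (s : ℕ) :
    (twist c (2 ^ s)).comp (twist c (2 ^ s)) = twist (c ^ 2 ^ s * c) (2 ^ (s + s)) := by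
  have hfrob : (twist c (2 ^ s)) ^ 2 ^ s = X ^ 2 ^ s + C (c ^ 2 ^ s) * X ^ 2 ^ (s + s) := by
    rw [twist, add_pow_char_pow, mul_pow, ← C_pow, ← pow_mul, ← pow_add]
  simp only [twist, add_comp, mul_comp, X_comp, C_comp, X_pow_comp] at hfrob ⊢
  rw [hfrob, C_mul]
  linear_combination C c * X ^ 2 ^ s * CharTwo.two_eq_zero (R := R[X])

omit [CharP R 2] in
theorem X_pow_dvd_twist_pow (c : R) (n : ℕ) : X ^ n ∣ twist c 2 ^ n :=
  pow_dvd_pow_of_dvd ⟨_, twist_two_eq_X_mul c⟩ n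

theorem X_pow_dvd_twist_pow_pred_sub {t : ℕ} (ht : t ≠ 0) (hev : Even t) (c : R) :
    X ^ (t + 1) ∣ twist c 2 ^ (t - 1) - (X ^ (t - 1) + C c * X ^ t) := by
  obtain ⟨m, rfl⟩ : ∃ m, t = 2 * m + 2 := by
    obtain ⟨k, rfl⟩ := hev; exact ⟨k - 1, by omega⟩
  have hsq : (1 + C c * X : R[X]) ^ 2 = 1 + C (c ^ 2) * X ^ 2 := by
    rw [add_pow_char, one_pow, mul_pow, C_pow]
  have hdvd : X ^ 2 ∣ (1 + C (c ^ 2) * X ^ 2 : R[X]) ^ m - 1 := by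
    have := sub_dvd_pow_sub_pow (1 + C (c ^ 2) * X ^ 2 : R[X]) 1 m
    rw [one_pow, add_sub_cancel_left] at this
    exact (dvd_mul_left _ _).trans this
  obtain ⟨u, hu⟩ := hdvd
  have hpow : (1 + C c * X : R[X]) ^ (2 * m + 1) = (X ^ 2 * u + 1) * (1 + C c * X) := by
    rw [pow_succ, pow_mul, hsq, ← hu, sub_add_cancel]
  refine ⟨(1 + C c * X) * u, ?_⟩
  rw [show 2 * m + 2 - 1 = 2 * m + 1 by omega, twist_two_eq_X_mul, mul_pow, hpow]
  ring

variable {A : Type*} [Ring A] [Algebra R A]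

theorem pow_two_pow_apply_eq_aeval_twist (σ : A →ₐ[R] A) {x : A} {c : R} {s : ℕ}
    (hx : σ x = aeval x (twist c (2 ^ s))) (n : ℕ) :
    ∃ c' : R, (σ ^ 2 ^ n) x = aeval x (twist c' (2 ^ (s * 2 ^ n))) := by
  induction n with
  | zero => exact ⟨c, by simpa using hx⟩
  | succ n ih =>
    obtain ⟨c', hc'⟩ := ih
    refine ⟨c' ^ 2 ^ (s * 2 ^ n) * c', ?_⟩
    rw [pow_succ, pow_mul, sq, AlgHom.mul_apply, hc', ← aeval_algHom_apply, hc', ← aeval_comp,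
      twist_comp_twist]
    ring_nf

theorem pow_two_pow_apply_eq_self (σ : A →ₐ[R] A) {x : A} {c : R} {s : ℕ} (hs : s ≠ 0)
    (hx : σ x = aeval x (twist c (2 ^ s))) {n : ℕ} (hnil : x ^ (n + 1) = 0) :
    (σ ^ 2 ^ n) x = x := by
  obtain ⟨c', hc'⟩ := pow_two_pow_apply_eq_aeval_twist σ hx n
  have hle : n + 1 ≤ 2 ^ (s * 2 ^ n) := calc
    n + 1 ≤ 2 ^ n := Nat.lt_two_pow_self
    _ ≤ s * 2 ^ n := Nat.le_mul_of_pos_left _ (Nat.pos_of_ne_zero hs)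
    _ ≤ 2 ^ (s * 2 ^ n) := Nat.lt_two_pow_self.le
  rw [hc', aeval_twist, pow_eq_zero_of_le hle hnil, smul_zero, add_zero]

section Twist

variable {K : Type} [Field K] {t : ℕ} {d e : K}

local notation "ε₁" => pi K t 1 d (e1 K)
local notation "ε₂" => pi K t 1 d (e2 K)
local notation "α" => pi K t 1 d (al K)
local notation "β" => pi K t 1 d (be K)
local notation "γ" => pi K t 1 d (ga K)
local notation "η" => pi K t 1 d (et K)

variable (t d) in
theorem pi_eq_of_rel {x y : FreeAlgebra K (Fin 6)} (h : QBRel K t 1 d x y) :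
    pi K t 1 d x = pi K t 1 d y :=
  RingQuot.mkAlgHom_rel K h

theorem e2_mul_ga : ε₂ * γ = γ := by simpa only [map_mul] using pi_eq_of_rel t d .sga
theorem ga_mul_e1 : γ * ε₁ = γ := by simpa only [map_mul] using pi_eq_of_rel t d .tga
theorem al_mul_e1 : α * ε₁ = α := by simpa only [map_mul] using pi_eq_of_rel t d .tal
theorem e2_mul_et : ε₂ * η = η := by simpa only [map_mul] using pi_eq_of_rel t d .set
theorem et_mul_e2 : η * ε₂ = η := by simpa only [map_mul] using pi_eq_of_rel t d .tet
theorem al_mul_be : α * β = β * η := by simpa only [map_mul] using pi_eq_of_rel t d .r1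
theorem et_mul_ga : η * γ = γ * α := by simpa only [map_mul] using pi_eq_of_rel t d .r2
theorem al_mul_al : α * α = β * γ + d • α ^ 3 := by
  simpa only [map_mul, map_add, map_smul, map_pow] using pi_eq_of_rel t d .r3
theorem ga_mul_be : γ * β = η ^ (t - 1) := by
  simpa only [map_mul, map_smul, map_pow, one_smul] using pi_eq_of_rel t d .r4
theorem al_pow_four : α ^ 4 = 0 := by simpa only [map_pow, map_zero] using pi_eq_of_rel t d .r5
theorem et_pow_succ : η ^ (t + 1) = 0 := by
  simpa only [map_pow, map_zero] using pi_eq_of_rel t d .r6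
theorem ga_mul_al_mul_al : γ * (α * α) = 0 := by
  simpa only [map_mul, map_zero] using pi_eq_of_rel t d .r7
theorem al_mul_al_mul_be : α * α * β = 0 := by
  simpa only [map_mul, map_zero] using pi_eq_of_rel t d .r8

theorem be_mul_et_mul_et : β * (η * η) = 0 := by
  rw [← mul_assoc, ← al_mul_be, mul_assoc, ← al_mul_be, ← mul_assoc, al_mul_al_mul_be]

theorem et_mul_ga_mul_al : η * (γ * α) = 0 := by
  rw [← mul_assoc, et_mul_ga, mul_assoc, ga_mul_al_mul_al]

theorem ga_mul_al_mul_be (ht : t ≠ 0) : γ * α * β = η ^ t := by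
  rw [mul_assoc, al_mul_be, ← mul_assoc, ga_mul_be, ← pow_succ, Nat.sub_add_cancel (by omega)]

theorem be_mul_ga_mul_al : β * (γ * α) = α ^ 3 := by
  rw [← mul_assoc, eq_sub_of_add_eq al_mul_al.symm, sub_mul, smul_mul_assoc, ← pow_succ,
    al_pow_four, smul_zero, sub_zero, ← sq, ← pow_succ]

variable (c : K)

local notation "γ'" => γ + c • (γ * α)
local notation "η'" => aeval η (twist c 2)

variable (t d) in
noncomputable def twistLift : FreeAlgebra K (Fin 6) →ₐ[K] RingQuot (QBRel K t 1 d) :=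
  FreeAlgebra.lift K ![ε₁, ε₂, α, β, γ', η']

@[simp] theorem twistLift_e1 : twistLift t d c (e1 K) = ε₁ := FreeAlgebra.lift_ι_apply _ _
@[simp] theorem twistLift_e2 : twistLift t d c (e2 K) = ε₂ := FreeAlgebra.lift_ι_apply _ _
@[simp] theorem twistLift_al : twistLift t d c (al K) = α := FreeAlgebra.lift_ι_apply _ _
@[simp] theorem twistLift_be : twistLift t d c (be K) = β := FreeAlgebra.lift_ι_apply _ _
@[simp] theorem twistLift_ga : twistLift t d c (ga K) = γ' := FreeAlgebra.lift_ι_apply _ _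
@[simp] theorem twistLift_et : twistLift t d c (et K) = η' := FreeAlgebra.lift_ι_apply _ _

theorem e2_mul_twisted_ga : ε₂ * γ' = γ' := by
  rw [mul_add, mul_smul_comm, ← mul_assoc, e2_mul_ga]

theorem twisted_ga_mul_e1 : γ' * ε₁ = γ' := by
  rw [add_mul, smul_mul_assoc, mul_assoc, al_mul_e1, ga_mul_e1]

theorem e2_mul_twisted_et : ε₂ * η' = η' := by
  rw [aeval_twist_two, mul_add, mul_smul_comm, ← mul_assoc, e2_mul_et]

theorem twisted_et_mul_e2 : η' * ε₂ = η' := by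
  rw [aeval_twist_two, add_mul, smul_mul_assoc, mul_assoc, et_mul_e2]

theorem al_mul_be_eq_be_mul_twisted_et : α * β = β * η' := by
  rw [aeval_twist_two, mul_add, mul_smul_comm, be_mul_et_mul_et, smul_zero, add_zero, al_mul_be]

theorem twisted_ga_mul_al : γ' * α = γ * α := by
  rw [add_mul, smul_mul_assoc, mul_assoc, ga_mul_al_mul_al, smul_zero, add_zero]

theorem twist_twist_ga [CharP K 2] : γ' + c • (γ' * α) = γ := by
  rw [twisted_ga_mul_al, add_assoc, add_self_eq_zero_of_charTwo K, add_zero]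

theorem twisted_et_mul_twisted_ga : η' * γ' = γ' * α := by
  simp only [aeval_twist_two, add_mul, mul_add, smul_mul_assoc, mul_smul_comm, mul_assoc,
    et_mul_ga, et_mul_ga_mul_al, ga_mul_al_mul_al, mul_zero, smul_zero, add_zero]

theorem al_mul_al_eq_be_mul_twisted_ga [CharP K 2] : α * α = β * γ' + (d + c) • α ^ 3 := by
  have hcc : c • α ^ 3 + c • α ^ 3 = 0 := add_self_eq_zero_of_charTwo K _
  rw [mul_add, mul_smul_comm, be_mul_ga_mul_al, al_mul_al]
  linear_combination (norm := module) -hcc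

theorem twisted_ga_mul_be [CharP K 2] (ht : t ≠ 0) (hev : Even t) : γ' * β = η' ^ (t - 1) := by
  have hnil : aeval η (twist c 2 ^ (t - 1) - (X ^ (t - 1) + C c * X ^ t)) = 0 :=
    aeval_eq_zero_of_X_pow_dvd et_pow_succ (X_pow_dvd_twist_pow_pred_sub ht hev c)
  rw [map_sub, sub_eq_zero, map_pow] at hnil
  rw [hnil, add_mul, smul_mul_assoc, ga_mul_be, ga_mul_al_mul_be ht]
  simp [Algebra.smul_def]

theorem twisted_et_pow_succ : η' ^ (t + 1) = 0 := by
  rw [← map_pow]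
  exact aeval_eq_zero_of_X_pow_dvd et_pow_succ (X_pow_dvd_twist_pow c _)

theorem twisted_ga_mul_al_mul_al : γ' * (α * α) = 0 := by
  rw [add_mul, smul_mul_assoc, ga_mul_al_mul_al, mul_assoc, ← mul_assoc α, ← mul_assoc γ,
    ga_mul_al_mul_al, zero_mul, smul_zero, add_zero]

theorem twistLift_rel [CharP K 2] (ht : t ≠ 0) (hev : Even t) (he : e = d + c)
    ⦃x y : FreeAlgebra K (Fin 6)⦄ (h : QBRel K t 1 e x y) :
    twistLift t d c x = twistLift t d c y := by
  subst he
  cases h <;> simp only [map_add, map_mul, map_pow, map_smul, map_one, map_zero, one_smul,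
    twistLift_e1, twistLift_e2, twistLift_al, twistLift_be, twistLift_ga, twistLift_et]
  case unit => simpa only [map_add, map_one] using pi_eq_of_rel t d .unit
  case idem1 => simpa only [map_mul] using pi_eq_of_rel t d .idem1
  case idem2 => simpa only [map_mul] using pi_eq_of_rel t d .idem2
  case orth12 => simpa only [map_mul, map_zero] using pi_eq_of_rel t d .orth12
  case orth21 => simpa only [map_mul, map_zero] using pi_eq_of_rel t d .orth21
  case sal => simpa only [map_mul] using pi_eq_of_rel t d .sal
  case tal => exact al_mul_e1
  case sbe => simpa only [map_mul] using pi_eq_of_rel t d .sbe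
  case tbe => simpa only [map_mul] using pi_eq_of_rel t d .tbe
  case sga => exact e2_mul_twisted_ga c
  case tga => exact twisted_ga_mul_e1 c
  case set => exact e2_mul_twisted_et c
  case tet => exact twisted_et_mul_e2 c
  case r1 => exact al_mul_be_eq_be_mul_twisted_et c
  case r2 => exact twisted_et_mul_twisted_ga c
  case r3 => exact al_mul_al_eq_be_mul_twisted_ga c
  case r4 => exact twisted_ga_mul_be c ht hev
  case r5 => exact al_pow_four
  case r6 => exact twisted_et_pow_succ c
  case r7 => exact twisted_ga_mul_al_mul_al c
  case r8 => exact al_mul_al_mul_be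

variable {c} [CharP K 2] (ht : t ≠ 0) (hev : Even t)

noncomputable def twistHom (he : e = d + c) :
    RingQuot (QBRel K t 1 e) →ₐ[K] RingQuot (QBRel K t 1 d) :=
  RingQuot.liftAlgHom K ⟨twistLift t d c, twistLift_rel c ht hev he⟩

theorem twistHom_pi (he : e = d + c) (x : FreeAlgebra K (Fin 6)) :
    twistHom ht hev he (pi K t 1 e x) = twistLift t d c x :=
  RingQuot.liftAlgHom_mkAlgHom_apply K _ _ x

theorem twistHom_comp_twistHom_pow (he : e = d + c) (he' : d = e + c) :
    ((twistHom ht hev he).comp (twistHom ht hev he')) ^ 2 ^ t = 1 := by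
  set τ := (twistHom ht hev he).comp (twistHom ht hev he')
  have hτ (x) : τ (pi K t 1 d x) = twistHom ht hev he (twistLift t e c x) := by
    rw [AlgHom.comp_apply, twistHom_pi]
  have fixed {x} (hx : τ x = x) : (τ ^ 2 ^ t) x = x := by
    rw [AlgHom.coe_pow, Function.iterate_fixed hx]
  suffices h : ∀ i, (τ ^ 2 ^ t) (pi K t 1 d (FreeAlgebra.ι K i)) = pi K t 1 d (FreeAlgebra.ι K i)
    by
    apply RingQuot.ringQuot_ext'
    exact FreeAlgebra.hom_ext (funext h)
  intro i
  fin_cases i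
  · exact fixed (x := pi K t 1 d (e1 K)) (by simp [hτ, twistHom_pi])
  · exact fixed (x := pi K t 1 d (e2 K)) (by simp [hτ, twistHom_pi])
  · exact fixed (x := pi K t 1 d (al K)) (by simp [hτ, twistHom_pi])
  · exact fixed (x := pi K t 1 d (be K)) (by simp [hτ, twistHom_pi])
  · exact fixed (x := pi K t 1 d (ga K)) (by simp [hτ, twistHom_pi, twist_twist_ga])
  · have hη : τ η = aeval η (twist (c ^ 2 * c) (2 ^ (1 + 1))) := by
      have hcomp := twist_comp_twist c 1
      rw [pow_one] at hcomp
      rw [hτ, twistLift_et, ← aeval_algHom_apply, twistHom_pi, twistLift_et, ← aeval_comp, hcomp]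
    exact pow_two_pow_apply_eq_self τ two_ne_zero hη et_pow_succ

end Twist

end SocleWSA8

open SocleWSA8 in
/-- Let `K` be a field of characteristic 2, `t ≥ 4` even,
`b ∈ K`.  Then `α ↦ α`, `β ↦ β`, `γ ↦ γ + bγα`, `η ↦ η + bη²` induces a
`K`-algebra isomorphism `Q(2B)_3^t(b) → Q(2B)_3^t(0)`. -/
theorem socle_wsa_stmt8 (K : Type) [Field K] (hchar : CharP K 2)
    (t : ℕ) (ht : 4 ≤ t) (hev : Even t) (b : K) :
    ∃ h : RingQuot (QBRel K t 1 b) ≃ₐ[K] RingQuot (QBRel K t 1 0),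
      h (pi K t 1 b (al K)) = pi K t 1 0 (al K) ∧
      h (pi K t 1 b (be K)) = pi K t 1 0 (be K) ∧
      h (pi K t 1 b (ga K)) = pi K t 1 0 (ga K) + b • pi K t 1 0 (ga K * al K) ∧
      h (pi K t 1 b (et K)) = pi K t 1 0 (et K) + b • pi K t 1 0 (et K * et K) := by
  have := hchar
  have ht0 : t ≠ 0 := by omega
  have hb : b = 0 + b := (zero_add b).symm
  have hb' : (0 : K) = b + b := (CharTwo.add_self_eq_zero b).symm
  have hpow : 2 ^ t ≠ 0 := pow_ne_zero _ two_ne_zero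
  have hbij := (twistHom ht0 hev hb).bijective_of_comp_pow_eq_one (twistHom ht0 hev hb') hpow hpow
    (twistHom_comp_twistHom_pow ht0 hev hb' hb) (twistHom_comp_twistHom_pow ht0 hev hb hb')
  refine ⟨AlgEquiv.ofBijective _ hbij, ?_, ?_, ?_, ?_⟩ <;>
    simp [twistHom_pi, aeval_twist_two]
end

section
/- Let K be a field of characteristic 2 and k ≥ 2. If a_0, b_0, c_0 ∈ K* satisfy a_0^k b_0^{k−1} c_0^k = b_0 c_0² and a_0^{k−1}(b_0 c_0)^k = a_0², then a_0³ = (b_0 c_0)² and a_0^{5k−6} = 1. -/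
section CommMonoid

variable {M : Type*} [CommMonoid M] {x y : M} {m : ℕ}

theorem pow_three_eq_sq_of_pow_mul_pow_eq_one (h₁ : x ^ (m + 2) * y ^ m = 1)
    (h₂ : x ^ (m + 1) * y ^ (m + 2) = x ^ 2) : x ^ 3 = y ^ 2 :=
  calc x ^ 3 = x ^ (m + 1) * y ^ (m + 2) * x := by rw [h₂, pow_succ]
    _ = x ^ (m + 2) * y ^ m * y ^ 2 := by rw [pow_succ x (m + 1), pow_add y m 2]; ac_rfl
    _ = y ^ 2 := by rw [h₁, one_mul]

theorem pow_five_mul_add_four_eq_one (h₁ : x ^ (m + 2) * y ^ m = 1) (h : x ^ 3 = y ^ 2) :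
    x ^ (5 * m + 4) = 1 :=
  calc x ^ (5 * m + 4) = x ^ (2 * m + 4) * (x ^ 3) ^ m := by
        rw [← pow_mul, ← pow_add]; ring_nf
    _ = x ^ (2 * m + 4) * (y ^ 2) ^ m := by rw [h]
    _ = (x ^ (m + 2) * y ^ m) ^ 2 := by
        rw [mul_pow, ← pow_mul, ← pow_mul, ← pow_mul, mul_comm 2 m]; ring_nf
    _ = 1 := by rw [h₁, one_pow]

end CommMonoid

theorem socle_wsa_stmt16_general (K : Type) [Field K]
    (k : ℕ) (hk : 2 ≤ k) (a0 b0 c0 : K)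
    (hb : b0 ≠ 0) (hc : c0 ≠ 0)
    (h1 : a0 ^ k * b0 ^ (k - 1) * c0 ^ k = b0 * c0 ^ 2)
    (h2 : a0 ^ (k - 1) * (b0 * c0) ^ k = a0 ^ 2) :
    a0 ^ 3 = (b0 * c0) ^ 2 ∧ a0 ^ (5 * k - 6) = 1 := by
  obtain ⟨m, rfl⟩ : ∃ m, k = m + 2 := ⟨k - 2, (Nat.sub_add_cancel hk).symm⟩
  rw [show m + 2 - 1 = m + 1 from rfl] at h1 h2
  have hone : a0 ^ (m + 2) * (b0 * c0) ^ m = 1 := by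
    refine mul_right_cancel₀ (mul_ne_zero hb (pow_ne_zero 2 hc)) ?_
    linear_combination h1
  have hcube := pow_three_eq_sq_of_pow_mul_pow_eq_one hone h2
  refine ⟨hcube, ?_⟩
  rw [show 5 * (m + 2) - 6 = 5 * m + 4 by omega]
  exact pow_five_mul_add_four_eq_one hone hcube

/-- Let `K` be a field of characteristic 2 and `k ≥ 2`.
If `a₀, b₀, c₀ ∈ K*` satisfy `a₀^k b₀^{k−1} c₀^k = b₀ c₀²` and
`a₀^{k−1} (b₀c₀)^k = a₀²`, then `a₀³ = (b₀c₀)²` and `a₀^{5k−6} = 1`. -/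
theorem socle_wsa_stmt16 (K : Type) [Field K] (hchar : CharP K 2)
    (k : ℕ) (hk : 2 ≤ k) (a0 b0 c0 : K)
    (ha : a0 ≠ 0) (hb : b0 ≠ 0) (hc : c0 ≠ 0)
    (h1 : a0 ^ k * b0 ^ (k - 1) * c0 ^ k = b0 * c0 ^ 2)
    (h2 : a0 ^ (k - 1) * (b0 * c0) ^ k = a0 ^ 2) :
    a0 ^ 3 = (b0 * c0) ^ 2 ∧ a0 ^ (5 * k - 6) = 1 :=
  socle_wsa_stmt16_general K k hk a0 b0 c0 hb hc h1 h2
end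

section
/- Let K be a field of characteristic 2, k ≥ 2, and let a_0 ∈ K* and sequences (a_j)_{j≥0} in K satisfy, for all m = 0, ..., k−2: Σ_{i+j=m} a_{4i} a_{4j+3} + Σ_{i+j=m} a_{4i+2} a_{4j} = 0. Then a_{4i+2} + a_{4i+3} = 0 for all i = 0, ..., k−2. -/
/-!
Reindexing the second sum by `i ↦ m - i` turns the hypothesis into the vanishing, in degrees
`m ≤ k - 2`, of the Cauchy product of `(a (4 i))ᵢ` with `(a (4 j + 2) + a (4 j + 3))ⱼ`. Since the
first factor has nonzero constant term, strong induction on the degree kills the second factor.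
-/

open Finset

theorem eq_zero_of_forall_sum_antidiagonal_mul_eq_zero {R : Type*} [Semiring R]
    [NoZeroDivisors R] {b c : ℕ → R} (hb : b 0 ≠ 0) {n : ℕ}
    (h : ∀ m ≤ n, ∑ x ∈ antidiagonal m, b x.1 * c x.2 = 0) :
    ∀ m ≤ n, c m = 0 := by
  intro m
  induction m using Nat.strong_induction_on with
  | _ m ih =>
    intro hm
    have hsingle : ∑ x ∈ antidiagonal m, b x.1 * c x.2 = b 0 * c m := by
      refine sum_eq_single_of_mem (0, m) (by simp) ?_
      rintro ⟨i, j⟩ hij hne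
      rw [HasAntidiagonal.mem_antidiagonal] at hij
      have hj : j < m := by
        by_contra! hmj
        exact hne (by ext <;> simp <;> omega)
      rw [ih j hj (by omega), mul_zero]
    exact (mul_eq_zero.mp (hsingle ▸ h m hm)).resolve_left hb

theorem socle_wsa_stmt18_general (K : Type) [Field K]
    (k : ℕ) (a : ℕ → K) (ha : a 0 ≠ 0)
    (h : ∀ m ≤ k - 2,
      (∑ i ∈ range (m + 1), a (4 * i) * a (4 * (m - i) + 3))
        + (∑ i ∈ range (m + 1), a (4 * i + 2) * a (4 * (m - i))) = 0) :
    ∀ i ≤ k - 2, a (4 * i + 2) + a (4 * i + 3) = 0 := by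
  refine eq_zero_of_forall_sum_antidiagonal_mul_eq_zero (b := fun i ↦ a (4 * i)) ha
    fun m hm ↦ ?_
  rw [← h m hm, ← Nat.sum_antidiagonal_eq_sum_range_succ (fun i j ↦ a (4 * i) * a (4 * j + 3)),
    ← Nat.sum_antidiagonal_eq_sum_range_succ (fun i j ↦ a (4 * i + 2) * a (4 * j)),
    ← Nat.sum_antidiagonal_swap (f := fun x ↦ a (4 * x.1 + 2) * a (4 * x.2)),
    ← sum_add_distrib]
  refine sum_congr rfl fun x _ ↦ ?_
  simp only [Prod.fst_swap, Prod.snd_swap]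
  ring

open Finset in
/-- Let `K` be a field of characteristic 2, `k ≥ 2`, and
`(a_j)` a sequence in `K` with `a 0 ≠ 0` satisfying, for all
`m = 0, …, k−2`:
`Σ_{i+j=m} a_{4i} a_{4j+3} + Σ_{i+j=m} a_{4i+2} a_{4j} = 0`.
Then `a_{4i+2} + a_{4i+3} = 0` for all `i = 0, …, k−2`. -/
theorem socle_wsa_stmt18 (K : Type) [Field K] (hchar : CharP K 2)
    (k : ℕ) (hk : 2 ≤ k) (a : ℕ → K) (ha : a 0 ≠ 0)
    (h : ∀ m ≤ k - 2,
      (∑ i ∈ range (m + 1), a (4 * i) * a (4 * (m - i) + 3))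
        + (∑ i ∈ range (m + 1), a (4 * i + 2) * a (4 * (m - i))) = 0) :
    ∀ i ≤ k - 2, a (4 * i + 2) + a (4 * i + 3) = 0 :=
  socle_wsa_stmt18_general K k a ha h
end

section
/- Let K be a field of characteristic 2, k ≥ 2, and let c_0 ∈ K* and sequences (b_j), (c_j) in K satisfy, for all m = 0, ..., k−2: Σ_{i+j+l=m} c_{2i} b_{2j+1} c_{2l} + Σ_{i+j+l=m} c_{2i+1} b_{2j} c_{2l} = 0 (sums over triples i, j, l ≥ 0 with i+j+l = m). Then for all m = 0, ..., k−2: Σ_{i+j=m} c_{2i} b_{2j+1} + Σ_{i+j=m} c_{2i+1} b_{2j} = 0. -/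
/-!
Writing `S n` for the double sum in the conclusion, associativity of the Cauchy product turns
the hypothesis into `∑_{n ≤ m} S n * c (2 (m - n)) = 0` for `m ≤ k - 2`. By induction on `m`
all terms with `n < m` vanish, leaving `S m * c 0 = 0`, and `c 0 ≠ 0`.
-/

open Finset

theorem sum_triple_convolution_eq_sum_convolution_mul {R : Type*}
    [NonUnitalNonAssocSemiring R] (x y z : ℕ → R) (m : ℕ) :
    ∑ i ∈ range (m + 1), ∑ j ∈ range (m - i + 1), x i * y j * z (m - i - j)
      = ∑ n ∈ range (m + 1), (∑ i ∈ range (n + 1), x i * y (n - i)) * z (m - n) :=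
  calc ∑ i ∈ range (m + 1), ∑ j ∈ range (m - i + 1), x i * y j * z (m - i - j)
      = ∑ i ∈ range (m + 1), ∑ j ∈ range (m + 1 - i), x i * y j * z (m - (i + j)) :=
        sum_congr rfl fun i hi => by
          rw [Nat.sub_add_comm (Nat.lt_succ_iff.mp (mem_range.mp hi))]
          simp only [Nat.sub_sub]
    _ = ∑ n ∈ range (m + 1), ∑ i ∈ range (n + 1), x i * y (n - i) * z (m - (i + (n - i))) :=
        (sum_range_diag_flip (m + 1) fun i j => x i * y j * z (m - (i + j))).symm
    _ = ∑ n ∈ range (m + 1), (∑ i ∈ range (n + 1), x i * y (n - i)) * z (m - n) :=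
        sum_congr rfl fun n _ => by
          rw [sum_mul]
          exact sum_congr rfl fun i hi => by
            rw [Nat.add_sub_cancel' (Nat.lt_succ_iff.mp (mem_range.mp hi))]

theorem eq_zero_of_convolution_eq_zero {R : Type*} [NonUnitalNonAssocSemiring R]
    [NoZeroDivisors R] {s d : ℕ → R} (hd : d 0 ≠ 0) {N : ℕ}
    (h : ∀ m ≤ N, ∑ n ∈ range (m + 1), s n * d (m - n) = 0) : ∀ m ≤ N, s m = 0 := by
  intro m
  induction m using Nat.strong_induction_on with
  | _ m ih =>
    intro hm
    have hearlier : ∀ n ∈ range m, s n * d (m - n) = 0 := fun n hn => by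
      rw [ih n (mem_range.mp hn) ((mem_range.mp hn).le.trans hm), zero_mul]
    have hlast := h m hm
    rw [sum_range_succ, sum_eq_zero hearlier, zero_add, Nat.sub_self] at hlast
    exact (mul_eq_zero.mp hlast).resolve_right hd

open Finset in
theorem socle_wsa_stmt19_general (K : Type) [Field K]
    (k : ℕ) (b c : ℕ → K) (hc : c 0 ≠ 0)
    (h : ∀ m ≤ k - 2,
      (∑ i ∈ range (m + 1), ∑ j ∈ range (m - i + 1),
          c (2 * i) * b (2 * j + 1) * c (2 * (m - i - j)))
        + (∑ i ∈ range (m + 1), ∑ j ∈ range (m - i + 1),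
          c (2 * i + 1) * b (2 * j) * c (2 * (m - i - j))) = 0) :
    ∀ m ≤ k - 2,
      (∑ i ∈ range (m + 1), c (2 * i) * b (2 * (m - i) + 1))
        + (∑ i ∈ range (m + 1), c (2 * i + 1) * b (2 * (m - i))) = 0 := by
  refine eq_zero_of_convolution_eq_zero (d := fun n => c (2 * n)) hc fun m hm => ?_
  have hm' := h m hm
  rw [sum_triple_convolution_eq_sum_convolution_mul (fun i => c (2 * i)) (fun j => b (2 * j + 1))
      (fun l => c (2 * l)),
    sum_triple_convolution_eq_sum_convolution_mul (fun i => c (2 * i + 1)) (fun j => b (2 * j))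
      (fun l => c (2 * l)),
    ← sum_add_distrib] at hm'
  simpa only [add_mul] using hm'

open Finset in
/-- Let `K` be a field of characteristic 2, `k ≥ 2`, and
`c 0 ≠ 0`, with sequences `(b_j), (c_j)` in `K` satisfying, for all
`m = 0, …, k−2`:
`Σ_{i+j+l=m} c_{2i} b_{2j+1} c_{2l} + Σ_{i+j+l=m} c_{2i+1} b_{2j} c_{2l} = 0`.
Then for all `m = 0, …, k−2`:
`Σ_{i+j=m} c_{2i} b_{2j+1} + Σ_{i+j=m} c_{2i+1} b_{2j} = 0`. -/
theorem socle_wsa_stmt19 (K : Type) [Field K] (hchar : CharP K 2)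
    (k : ℕ) (hk : 2 ≤ k) (b c : ℕ → K) (hc : c 0 ≠ 0)
    (h : ∀ m ≤ k - 2,
      (∑ i ∈ range (m + 1), ∑ j ∈ range (m - i + 1),
          c (2 * i) * b (2 * j + 1) * c (2 * (m - i - j)))
        + (∑ i ∈ range (m + 1), ∑ j ∈ range (m - i + 1),
          c (2 * i + 1) * b (2 * j) * c (2 * (m - i - j))) = 0) :
    ∀ m ≤ k - 2,
      (∑ i ∈ range (m + 1), c (2 * i) * b (2 * (m - i) + 1))
        + (∑ i ∈ range (m + 1), c (2 * i + 1) * b (2 * (m - i))) = 0 :=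
  socle_wsa_stmt19_general K k b c hc h
end
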